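/- arXiv:2103.01147 — 3 statements merged into one kernel-verified Lean document; each statement's English description precedes it below -/
import Mathlib

section
/- Let q be a prime and t_2,…,t_k be residues modulo q. Let (v_1,…,v_k) be a non-zero vector in the lattice L(t_2,…,t_k) with gcd(v_1,…,v_k) = 1 and |v_i| < sqrt(q/2) for all i, and let (w_1,…,w_k) be another vector in L(t_2,…,t_k) with |w_i| < sqrt(q/2) for all i. Then there exists an integer a such that (w_1,…,w_k) = a·(v_1,…,v_k). -/
/-- Membership in the lattice `L(t_2,…,t_k)`: integer vectors `v ∈ ℤ^k`
with `v i ≡ t i * v 0 (mod q)` for every coordinate `i ≠ 0`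
(the first coordinate plays the role of `v_1`). -/
def InLatticeL (q : ℕ) {k : ℕ} [NeZero k] (t : Fin k → ℤ) (v : Fin k → ℤ) : Prop :=
  ∀ i : Fin k, i ≠ 0 → (q : ℤ) ∣ v i - t i * v 0

/-- If `v` is a non-zero vector of the lattice `L(t_2,…,t_k)` with
coprime entries, all of absolute value `< √(q/2)`, and `w` is any vector of the lattice
with entries of absolute value `< √(q/2)`, then `w = a • v` for some integer `a`. -/
theorem collinearity_of_short_lattice_vectors
    (q k : ℕ) [NeZero k] (hq : q.Prime) (t : Fin k → ℤ) (v w : Fin k → ℤ)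
    (hv : InLatticeL q t v) (hw : InLatticeL q t w)
    (hv0 : v ≠ 0)
    (hgcd : Finset.univ.gcd v = 1)
    (hvshort : ∀ i, (|v i| : ℝ) < Real.sqrt (q / 2))
    (hwshort : ∀ i, (|w i| : ℝ) < Real.sqrt (q / 2)) :
    ∃ a : ℤ, ∀ i, w i = a * v i := by
  have hq0 : (0:ℝ) ≤ (q:ℝ) / 2 := by positivity
  -- the cross products vanish
  have key : ∀ i j, v i * w j = v j * w i := by
    intro i j
    have hdvd : (q:ℤ) ∣ v i * w j - v j * w i := by
      rcases eq_or_ne i 0 with hi | hi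
      · rcases eq_or_ne j 0 with hj | hj
        · subst hi; subst hj; simp
        · subst hi
          have h1 := hv j hj
          have h2 := hw j hj
          have h : v 0 * w j - v j * w 0 =
              v 0 * (w j - t j * w 0) - w 0 * (v j - t j * v 0) := by ring
          rw [h]
          exact dvd_sub (h2.mul_left _) (h1.mul_left _)
      · rcases eq_or_ne j 0 with hj | hj
        · subst hj
          have h1 := hv i hi
          have h2 := hw i hi
          have h : v i * w 0 - v 0 * w i =
              w 0 * (v i - t i * v 0) - v 0 * (w i - t i * w 0) := by ring
          rw [h]
          exact dvd_sub (h1.mul_left _) (h2.mul_left _)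
        · have h1 := hv i hi
          have h2 := hv j hj
          have h3 := hw i hi
          have h4 := hw j hj
          have h : v i * w j - v j * w i =
              w j * (v i - t i * v 0) - w i * (v j - t j * v 0)
                + t i * v 0 * (w j - t j * w 0) - t j * v 0 * (w i - t i * w 0) := by
            ring
          rw [h]
          exact dvd_sub (dvd_add (dvd_sub (h1.mul_left _) (h2.mul_left _))
            (h4.mul_left _)) (h3.mul_left _)
    have hb1 : |(v i : ℝ)| * |(w j : ℝ)| < (q:ℝ) / 2 := by
      have := mul_lt_mul'' (hvshort i) (hwshort j)
        (by exact_mod_cast abs_nonneg (v i)) (by exact_mod_cast abs_nonneg (w j))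
      rw [Real.mul_self_sqrt hq0] at this
      push_cast
      exact this
    have hb2 : |(v j : ℝ)| * |(w i : ℝ)| < (q:ℝ) / 2 := by
      have := mul_lt_mul'' (hvshort j) (hwshort i)
        (by exact_mod_cast abs_nonneg (v j)) (by exact_mod_cast abs_nonneg (w i))
      rw [Real.mul_self_sqrt hq0] at this
      push_cast
      exact this
    have hboundR : (|v i * w j - v j * w i| : ℝ) < (q:ℝ) := by
      have h1 : (|v i * w j - v j * w i| : ℝ)
          ≤ (|v i * w j| : ℝ) + (|v j * w i| : ℝ) := by
        push_cast
        exact abs_sub _ _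
      have h2 : (|v i * w j| : ℝ) = (|v i| : ℝ) * (|w j| : ℝ) := by
        push_cast [abs_mul]; ring
      have h3 : (|v j * w i| : ℝ) = (|v j| : ℝ) * (|w i| : ℝ) := by
        push_cast [abs_mul]; ring
      rw [h2, h3] at h1
      linarith
    have hbound : |v i * w j - v j * w i| < (q:ℤ) := by exact_mod_cast hboundR
    have := Int.eq_zero_of_abs_lt_dvd hdvd hbound
    linarith
  obtain ⟨i0, hi0⟩ := Function.ne_iff.mp hv0
  have hi0' : v i0 ≠ 0 := by simpa using hi0
  have hdg : v i0 ∣ w i0 := by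
    have h : v i0 ∣ Finset.univ.gcd (fun i => v i * w i0) :=
      Finset.dvd_gcd fun i _ => ⟨w i, key i i0⟩
    rw [Finset.gcd_mul_right, hgcd, one_mul] at h
    exact dvd_normalize_iff.mp h
  obtain ⟨a, ha⟩ := hdg
  refine ⟨a, fun j => ?_⟩
  have hk := key j i0
  rw [ha] at hk
  exact mul_left_cancel₀ hi0' (by linear_combination -hk)
end

section
/- Let q be a prime and t_2,…,t_k be residues modulo q. If (v_1,…,v_k) is a non-zero vector in the lattice L(t_2,…,t_k) with |v_i| < sqrt(q/2) for all i, and d = gcd(v_1,…,v_k), then the primitive vector (v_1/d,…,v_k/d) also belongs to L(t_2,…,t_k). -/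
/-- If `v` is a non-zero vector of the lattice `L(t_2,…,t_k)` with
all entries of absolute value `< √(q/2)`, and `d = gcd(v_1,…,v_k)`, then the primitive
vector `(v_1/d,…,v_k/d)` also belongs to `L(t_2,…,t_k)`. -/
theorem primitive_vector_mem_lattice
    (q k : ℕ) [NeZero k] (hq : q.Prime) (t : Fin k → ℤ) (v : Fin k → ℤ)
    (hv : InLatticeL q t v) (hv0 : v ≠ 0)
    (hvshort : ∀ i, (|v i| : ℝ) < Real.sqrt (q / 2))
    (d : ℤ) (hd : d = Finset.univ.gcd v) :
    InLatticeL q t (fun i => v i / d) := by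
  -- pick a nonzero coordinate
  obtain ⟨j, hj⟩ : ∃ j, v j ≠ 0 := by
    by_contra h
    push_neg at h
    exact hv0 (funext h)
  have hdvd : ∀ i, d ∣ v i := fun i => hd ▸ Finset.gcd_dvd (Finset.mem_univ i)
  have hdne : d ≠ 0 := fun h => hj ((h ▸ hdvd j).elim (fun c hc => by simp [hc, h]))
  -- |d| ≤ |v j| < √(q/2) < q, so q does not divide d
  have hdle : |d| ≤ |v j| :=
    Int.le_of_dvd (abs_pos.mpr hj) ((abs_dvd _ _).mpr ((dvd_abs _ _).mpr (hdvd j)))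
  have hq0 : (0 : ℝ) < q := by exact_mod_cast hq.pos
  have hsq : Real.sqrt (q / 2) < q := by
    rw [Real.sqrt_lt' hq0]
    have h2 : (2 : ℝ) ≤ q := by exact_mod_cast hq.two_le
    nlinarith [mul_le_mul_of_nonneg_left h2 hq0.le]
  have hdlt : |d| < q := by
    have h1 := (hvshort j).trans hsq
    have h2 : (|d| : ℝ) < q := by
      calc (|d| : ℝ) ≤ (|v j| : ℝ) := by exact_mod_cast hdle
        _ < q := h1
    exact_mod_cast h2
  have hqd : ¬ (q : ℤ) ∣ d := fun h => by
    have h1 := Int.le_of_dvd (abs_pos.mpr hdne) ((dvd_abs _ _).mpr h)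
    linarith
  intro i hi
  have h1 := hv i hi
  obtain ⟨wi, hwi⟩ := hdvd i
  obtain ⟨w0, hw0⟩ := hdvd 0
  have ei : v i / d = wi := by rw [hwi, Int.mul_ediv_cancel_left _ hdne]
  have e0 : v 0 / d = w0 := by rw [hw0, Int.mul_ediv_cancel_left _ hdne]
  simp only [ei, e0]
  have h2 : (q : ℤ) ∣ d * (wi - t i * w0) := by
    have heq : v i - t i * v 0 = d * (wi - t i * w0) := by rw [hwi, hw0]; ring
    rwa [heq] at h1
  rcases (Int.Prime.dvd_mul' (by exact_mod_cast hq) h2) with h | h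
  · exact absurd h hqd
  · exact h
end

section
/- Let q be a prime and t_2,…,t_k be residues modulo q. Suppose V_1,…,V_m are vectors in the lattice L(t_2,…,t_k), not all zero, such that every entry of every V_i has absolute value less than sqrt(q/2). Then there exists an integer vector v = (v_1,…,v_k) and integers a_1,…,a_m such that V_i = a_i·v for every i. -/
/-- If `V_1,…,V_m` are vectors of the lattice `L(t_2,…,t_k)`, not all
zero, all of whose entries have absolute value `< √(q/2)`, then there is a single integer
vector `v` and integers `a_1,…,a_m` with `V_i = a_i • v` for every `i`. -/
theorem short_lattice_vectors_all_collinear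
    (q k m : ℕ) [NeZero k] (hq : q.Prime) (t : Fin k → ℤ)
    (V : Fin m → Fin k → ℤ)
    (hmem : ∀ i, InLatticeL q t (V i))
    (hne : ∃ i, V i ≠ 0)
    (hshort : ∀ i j, (|V i j| : ℝ) < Real.sqrt (q / 2)) :
    ∃ (v : Fin k → ℤ) (a : Fin m → ℤ), ∀ i j, V i j = a i * v j := by
  classical
  have hq2 : (2 : ℕ) ≤ q := hq.two_le
  have hq0 : (0 : ℝ) ≤ (q : ℝ) / 2 := by positivity
  -- product bound
  have hprod : ∀ i j i' j', (|V i j * V i' j'| : ℝ) < (q : ℝ) / 2 := by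
    intro i j i' j'
    have hx := hshort i j
    have hy := hshort i' j'
    have h1 : (|V i j * V i' j'| : ℝ) = (|V i j| : ℝ) * (|V i' j'| : ℝ) := by
      push_cast [abs_mul]; ring
    rw [h1]
    calc (|V i j| : ℝ) * (|V i' j'| : ℝ)
        < Real.sqrt ((q:ℝ)/2) * Real.sqrt ((q:ℝ)/2) := by
          apply mul_lt_mul'' hx hy <;> positivity
      _ = (q : ℝ) / 2 := Real.mul_self_sqrt hq0
  -- cross relation
  have cross : ∀ i i' (j : Fin k), V i j * V i' 0 = V i' j * V i 0 := by
    intro i i' j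
    by_cases hj : j = 0
    · subst hj; ring
    · have h1 := hmem i j hj
      have h2 := hmem i' j hj
      have hdvd : (q : ℤ) ∣ V i j * V i' 0 - V i' j * V i 0 := by
        have heq : V i j * V i' 0 - V i' j * V i 0 =
            (V i j - t j * V i 0) * V i' 0 - (V i' j - t j * V i' 0) * V i 0 := by ring
        rw [heq]
        exact dvd_sub (h1.mul_right _) (h2.mul_right _)
      have habs : |V i j * V i' 0 - V i' j * V i 0| < (q : ℤ) := by
        have hR : (|V i j * V i' 0 - V i' j * V i 0| : ℝ) < (q : ℝ) := by
          calc (|V i j * V i' 0 - V i' j * V i 0| : ℝ)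
              ≤ (|V i j * V i' 0| : ℝ) + (|V i' j * V i 0| : ℝ) := by
                exact abs_sub _ _
            _ < (q:ℝ)/2 + (q:ℝ)/2 := add_lt_add (hprod i j i' 0) (hprod i' j i 0)
            _ = (q : ℝ) := by ring
        exact_mod_cast hR
      have := Int.eq_zero_of_abs_lt_dvd hdvd habs
      linarith
  -- vector with zero first coordinate is zero
  have hzero : ∀ i, V i 0 = 0 → V i = 0 := by
    intro i hi
    funext j
    by_cases hj : j = 0
    · subst hj; exact hi
    · have h1 := hmem i j hj
      rw [hi, mul_zero, sub_zero] at h1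
      have habs : |V i j| < (q : ℤ) := by
        have hR : (|V i j| : ℝ) < (q : ℝ) := by
          refine lt_of_lt_of_le (hshort i j) ?_
          have : Real.sqrt ((q:ℝ)/2) ≤ Real.sqrt ((q:ℝ)^2) := by
            apply Real.sqrt_le_sqrt
            have : (2:ℝ) ≤ (q:ℝ) := by exact_mod_cast hq2
            nlinarith
          rwa [Real.sqrt_sq (by positivity)] at this
        exact_mod_cast hR
      exact Int.eq_zero_of_abs_lt_dvd h1 habs
  -- the ideal generated by the first coordinates
  set I : Ideal ℤ := Ideal.span (Set.range fun i => V i 0) with hI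
  obtain ⟨g, hg⟩ := (IsPrincipalIdealRing.principal I).principal
  have hmemI : ∀ i, V i 0 ∈ I := fun i => Ideal.subset_span ⟨i, rfl⟩
  have hdvdg : ∀ i, g ∣ V i 0 := by
    intro i
    have := hmemI i
    rw [hg] at this
    exact Ideal.mem_span_singleton.mp this
  have hgI : g ∈ I := by rw [hg]; exact Ideal.mem_span_singleton_self g
  obtain ⟨c, hc⟩ := (Submodule.mem_span_range_iff_exists_fun ℤ).mp hgI
  have hgne : g ≠ 0 := by
    intro h0
    obtain ⟨i, hi⟩ := hne
    apply hi
    apply hzero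
    have := hdvdg i
    rw [h0] at this
    exact zero_dvd_iff.mp this
  refine ⟨fun j => ∑ i', c i' * V i' j, fun i => V i 0 / g, ?_⟩
  intro i j
  apply mul_right_cancel₀ hgne
  have key : (∑ i', c i' * V i' j) * V i 0 = V i j * g := by
    rw [← hc, Finset.sum_mul, Finset.mul_sum]
    apply Finset.sum_congr rfl
    intro i' _
    have := cross i i' j
    simp only [smul_eq_mul]
    linear_combination (- c i') * cross i i' j
  have ha : V i 0 / g * g = V i 0 := Int.ediv_mul_cancel (hdvdg i)
  calc V i j * g = (∑ i', c i' * V i' j) * V i 0 := key.symm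
    _ = V i 0 / g * (∑ i', c i' * V i' j) * g := by
        conv_lhs => rw [← ha]
        ring
end
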